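/- arXiv:2508.17542 — 4 statements merged into one kernel-verified Lean document; each statement's English description precedes it below -/
import Mathlib

section
/- Let H be an n×n Hermitian complex matrix and U(t) := exp(itH). Let S : ℝ → M_n(ℂ) be continuously differentiable with S(t) unitary for every t and S(0) = 1, and define A(t) := S(t)* H S(t) − i (d/dt S(t)*) S(t). Then for every t ≥ 0, ‖S(t)* U(t) − 1‖ ≤ ∫₀ᵗ ‖A(s)‖ ds. -/
/-!
In the interaction picture `W t = S(t)* U(t)` is unitary and solves `W' = i A W`, `W 0 = 1`
(the terms containing `S'` combine thanks to `S S* = 1`). Hence `‖W'‖ = ‖A‖`, and the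
displacement `‖W t - W 0‖` is at most the integral of the speed `‖A‖`.
-/

open scoped Matrix.Norms.L2Operator
open Matrix

/-- `U t = exp(itH)`. -/
noncomputable def timeEvol {n : ℕ} (H : Matrix (Fin n) (Fin n) ℂ) (t : ℝ) :
    Matrix (Fin n) (Fin n) ℂ :=
  NormedSpace.exp ((Complex.I * (t : ℂ)) • H)

section timeEvol

variable {n : ℕ} (H : Matrix (Fin n) (Fin n) ℂ)

theorem timeEvol_zero : timeEvol H 0 = 1 := by
  simp [timeEvol]

theorem timeEvol_eq_exp_smul (t : ℝ) :
    timeEvol H t = NormedSpace.exp (t • (Complex.I • H)) := by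
  rw [timeEvol, ← Complex.coe_smul, smul_smul, mul_comm]

theorem hasDerivAt_timeEvol (t : ℝ) :
    HasDerivAt (timeEvol H) (timeEvol H t * (Complex.I • H)) t := by
  simpa only [← timeEvol_eq_exp_smul] using
    hasDerivAt_exp_smul_const (𝕂 := ℝ) (Complex.I • H) t

theorem commute_timeEvol_self (t : ℝ) : Commute (timeEvol H t) H :=
  ((Commute.refl H).smul_left _).exp_left

theorem timeEvol_mem_unitaryGroup (hH : Hᴴ = H) (t : ℝ) :
    timeEvol H t ∈ unitaryGroup (Fin n) ℂ := by
  have hself : IsSelfAdjoint (t • H) := (IsSelfAdjoint.all t).smul hH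
  convert (selfAdjoint.expUnitary ⟨t • H, hself⟩).prop using 1
  change _ = NormedSpace.exp (Complex.I • t • H)
  rw [timeEvol, ← Complex.coe_smul, smul_smul]

theorem hasDerivAt_conjTranspose_mul_timeEvol {S : ℝ → Matrix (Fin n) (Fin n) ℂ}
    {S' : Matrix (Fin n) (Fin n) ℂ} {t : ℝ} (hS : HasDerivAt S S' t)
    (hSt : S t ∈ unitaryGroup (Fin n) ℂ) :
    HasDerivAt (fun s => (S s)ᴴ * timeEvol H s)
      (Complex.I • (((S t)ᴴ * H * S t - Complex.I • (S'ᴴ * S t)) * ((S t)ᴴ * timeEvol H t))) t := by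
  have hSS : S t * (S t)ᴴ = 1 := Unitary.mul_star_self_of_mem hSt
  have key : Complex.I • (((S t)ᴴ * H * S t - Complex.I • (S'ᴴ * S t)) * ((S t)ᴴ * timeEvol H t))
      = S'ᴴ * timeEvol H t + (S t)ᴴ * (timeEvol H t * Complex.I • H) := by
    simp only [sub_mul, mul_assoc, smul_sub, smul_mul_assoc, smul_smul]
    rw [← mul_assoc (S t), hSS, one_mul, Complex.I_mul_I, mul_smul_comm,
      (commute_timeEvol_self H t).eq, neg_one_smul, sub_neg_eq_add, add_comm, mul_smul_comm]
  rw [key]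
  exact hS.star.mul (hasDerivAt_timeEvol H t)

end timeEvol

/-- if `S` is continuously differentiable, unitary valued, `S 0 = 1`, and
`A t = S tᴴ * H * S t - i (d/dt S tᴴ) * S t`, then for `t ≥ 0`,
`‖S tᴴ * U t - 1‖ ≤ ∫₀ᵗ ‖A s‖ ds`. -/
theorem stmt1 {n : ℕ} (H : Matrix (Fin n) (Fin n) ℂ) (hH : Hᴴ = H)
    (S S' : ℝ → Matrix (Fin n) (Fin n) ℂ)
    (hS : ∀ t, HasDerivAt S (S' t) t) (hS'cont : Continuous S')
    (hSunit : ∀ t, (S t)ᴴ * S t = 1) (hS0 : S 0 = 1)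
    (A : ℝ → Matrix (Fin n) (Fin n) ℂ)
    (hA : A = fun t => (S t)ᴴ * H * S t - Complex.I • ((S' t)ᴴ * S t)) :
    ∀ t : ℝ, 0 ≤ t →
      ‖(S t)ᴴ * timeEvol H t - 1‖ ≤ ∫ s in (0:ℝ)..t, ‖A s‖ := by
  intro t ht
  set W : ℝ → Matrix (Fin n) (Fin n) ℂ := fun s => (S s)ᴴ * timeEvol H s
  have hSmem (s : ℝ) : S s ∈ unitaryGroup (Fin n) ℂ := mem_unitaryGroup_iff'.mpr (hSunit s)
  have hWmem (s : ℝ) : W s ∈ unitaryGroup (Fin n) ℂ :=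
    mul_mem (Unitary.star_mem (hSmem s)) (timeEvol_mem_unitaryGroup H hH s)
  have hW (s : ℝ) : HasDerivAt W (Complex.I • (A s * W s)) s :=
    hA ▸ hasDerivAt_conjTranspose_mul_timeEvol H (hS s) (hSmem s)
  have hWspeed (s : ℝ) : ‖deriv W s‖ = ‖A s‖ := by
    rw [(hW s).deriv, norm_smul, Complex.norm_I, one_mul]
    exact CStarRing.norm_mul_coe_unitary (A s) ⟨W s, hWmem s⟩
  have hAcont : Continuous A := by
    have hScont : Continuous S := continuous_iff_continuousAt.mpr fun s => (hS s).continuousAt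
    rw [hA]
    fun_prop
  calc ‖(S t)ᴴ * timeEvol H t - 1‖ = ‖W t - W 0‖ := by simp [W, hS0, timeEvol_zero]
    _ ≤ ∫ s in (0:ℝ)..t, ‖A s‖ :=
      norm_sub_le_integral_of_norm_deriv_le_of_le ht
        (fun s _ => (hW s).continuousAt.continuousWithinAt)
        (fun s _ => (hW s).differentiableAt.differentiableWithinAt)
        (Filter.Eventually.of_forall fun s _ => (hWspeed s).le)
        (hAcont.norm.intervalIntegrable 0 t)
end

section
/- For every t ≥ 0, Σ_{m=0}^{k} Σ_{r=1}^{r_max} p_m(t) p_{r|m} θ_{m r}(t) P_r = t^{k+1} Σ_{m=0}^{k} (t^{m}/(m+1+k)) Σ_{r=1}^{r_max} α_{m r} P_r; that is, the first moment of the sampled rotation generators reproduces the degree-(2k+1) truncation of the integrated error Hamiltonian. -/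
open Matrix

namespace Stmt3

variable (k : ℕ)

/-- `λ_m := Σ_r |α_{m r}|`. -/
noncomputable def lam {rmax : ℕ} (α : ℕ → Fin rmax → ℝ) (m : ℕ) : ℝ :=
  ∑ r : Fin rmax, |α m r|

/-- `Λ(t) := Σ_{l=0}^k t^l/(k+1+l)`. -/
noncomputable def Lam (t : ℝ) : ℝ :=
  ∑ l ∈ Finset.range (k + 1), t ^ l / (k + 1 + l)

/-- `p_m(t) := t^m/((m+1+k) Λ(t))`. -/
noncomputable def pm (m : ℕ) (t : ℝ) : ℝ :=
  t ^ m / ((m + 1 + k) * Lam k t)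

/-- `p_{r|m} := |α_{m r}|/λ_m`. -/
noncomputable def prm {rmax : ℕ} (α : ℕ → Fin rmax → ℝ) (m : ℕ) (r : Fin rmax) : ℝ :=
  |α m r| / lam α m

/-- `θ_{m r}(t) := t^{k+1} sign(α_{m r}) Λ(t) λ_m`. -/
noncomputable def theta {rmax : ℕ} (α : ℕ → Fin rmax → ℝ) (m : ℕ) (r : Fin rmax)
    (t : ℝ) : ℝ :=
  t ^ (k + 1) * Real.sign (α m r) * Lam k t * lam α m

lemma sign_mul_abs' (x : ℝ) : Real.sign x * |x| = x := by
  rcases lt_trichotomy x 0 with h | h | h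
  · rw [Real.sign_of_neg h, abs_of_neg h]; ring
  · simp [h]
  · rw [Real.sign_of_pos h, abs_of_pos h]; ring

/-- the first moment of the sampled rotation generators reproduces the
degree-`2k+1` truncation of the integrated error Hamiltonian. -/
theorem stmt3 {n rmax : ℕ} (hrmax : 1 ≤ rmax)
    (P : Fin rmax → Matrix (Fin n) (Fin n) ℂ)
    (α : ℕ → Fin rmax → ℝ)
    (hlam : ∀ m ≤ k, 0 < lam α m) :
    ∀ t : ℝ, 0 ≤ t →
      ∑ m ∈ Finset.range (k + 1), ∑ r : Fin rmax,
          (pm k m t * prm α m r * theta k α m r t) • P r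
        = t ^ (k + 1) •
            ∑ m ∈ Finset.range (k + 1),
              (t ^ m / (m + 1 + k)) • ∑ r : Fin rmax, α m r • P r := by
  intro t ht
  have hΛ : 0 < Lam k t := by
    apply Finset.sum_pos'
    · intro l _; positivity
    · exact ⟨0, Finset.mem_range.2 (Nat.succ_pos k), by positivity⟩
  rw [Finset.smul_sum]
  apply Finset.sum_congr rfl
  intro m hm
  rw [Finset.smul_sum, Finset.smul_sum]
  apply Finset.sum_congr rfl
  intro r _
  rw [smul_smul, smul_smul]
  congr 1
  have hlm : lam α m ≠ 0 := (hlam m (Nat.lt_succ_iff.mp (Finset.mem_range.mp hm))).ne'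
  have hmk : ((m : ℝ) + 1 + k) ≠ 0 := by positivity
  unfold pm prm theta
  have key : t ^ m / ((m + 1 + k) * Lam k t) * (|α m r| / lam α m) *
      (t ^ (k + 1) * Real.sign (α m r) * Lam k t * lam α m)
      = t ^ (k + 1) * (t ^ m / (m + 1 + k)) * (Real.sign (α m r) * |α m r|) := by
    field_simp
  rw [key, sign_mul_abs']
end Stmt3
end

section
/- Let A, B ∈ M_n(ℂ). There exists a constant C ≥ 0 such that for all t ∈ [0,1], ‖ exp(it(A+B)) − exp(itA/2) · exp(itB) · exp(itA/2) · exp( −i (t³/24) [A + 2B, [A,B]] ) ‖ ≤ C t⁴. -/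
/-!
Expand every factor to third order in the time variable `z`: `exp (z • X)` is
`1 + z X + z² X²/2 + z³ X³/6 + O(z⁴)`, and the correction factor `exp (z³ • W)` is
`1 + z³ W + O(z⁴)`. Third-order expansions multiply like polynomials truncated at degree three, and a noncommutative
polynomial identity shows that with `P = iA`, `Q = iB` the corrected Strang product has the same
third-order expansion as `exp (z • (P + Q))`: `[P + 2Q, [P, Q]] / 24` is exactly the cubic defect of
the Strang splitting. The resulting `O(t⁴)` bound near `0` becomes a bound on all of `[0, 1]` by
compactness, since the error is continuous and `t⁴` is bounded below away from `0`.
-/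

open scoped Matrix.Norms.L2Operator
open Matrix

open Asymptotics Filter Topology NormedSpace
open scoped Nat

theorem Asymptotics.isBigO_principal_of_isBigO_nhdsWithin {α E F : Type*} [TopologicalSpace α]
    [SeminormedAddGroup E] [NormedAddCommGroup F] {f : α → E} {g : α → F} {s : Set α} {a : α}
    (hs : IsCompact s) (hf : ContinuousOn f s) (hg : ContinuousOn g s)
    (hg₀ : ∀ x ∈ s, x ≠ a → g x ≠ 0) (h : f =O[𝓝[s] a] g) : f =O[𝓟 s] g := by
  obtain ⟨c, hc⟩ := h.bound
  obtain ⟨U, hUo, haU, hU⟩ := mem_nhdsWithin.1 hc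
  have hK : IsCompact (s \ U) := hs.diff hUo
  have hnear : f =O[𝓟 (s ∩ U)] g :=
    isBigO_principal.2 ⟨c, fun x hx => hU ⟨hx.2, hx.1⟩⟩
  have hfar : f =O[𝓟 (s \ U)] g :=
    ((hf.mono Set.sdiff_subset).isBigO_principal hK (c := (1 : ℝ)) (by simp)).trans
      ((hg.mono Set.sdiff_subset).isBigO_rev_principal hK
        (fun x hx => hg₀ x hx.1 fun hxa => hx.2 (hxa ▸ haU)) 1)
  rw [← Set.inter_union_sdiff s U, ← sup_principal]
  exact hnear.sup hfar

section CubicExpansion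

variable {𝕜 𝔸 : Type*} [NormedField 𝕜] [NormedRing 𝔸] [NormedAlgebra 𝕜 𝔸]

def cubicPoly (a b c d : 𝔸) (z : 𝕜) : 𝔸 := a + z • b + z ^ 2 • c + z ^ 3 • d

def HasCubicExpansion (f : 𝕜 → 𝔸) (a b c d : 𝔸) : Prop :=
  (fun z => f z - cubicPoly a b c d z) =O[𝓝 0] fun z => z ^ 4

theorem continuous_cubicPoly (a b c d : 𝔸) : Continuous (cubicPoly a b c d : 𝕜 → 𝔸) := by
  unfold cubicPoly
  fun_prop

theorem cubicPoly_mul_cubicPoly (a b c d a' b' c' d' : 𝔸) (z : 𝕜) :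
    cubicPoly a b c d z * cubicPoly a' b' c' d' z =
      cubicPoly (a * a') (a * b' + b * a') (a * c' + b * b' + c * a')
          (a * d' + b * c' + c * b' + d * a') z +
        z ^ 4 • ((b * d' + c * c' + d * b') + z • (c * d' + d * c') + z ^ 2 • (d * d')) := by
  simp only [cubicPoly, mul_add, add_mul, smul_mul_assoc, mul_smul_comm, smul_smul, smul_add]
  module

theorem HasCubicExpansion.isBigO_one {f : 𝕜 → 𝔸} {a b c d : 𝔸}
    (hf : HasCubicExpansion f a b c d) : f =O[𝓝 0] fun _ => (1 : 𝕜) := by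
  have hpoly := ((continuous_cubicPoly (𝕜 := 𝕜) a b c d).tendsto 0).isBigO_one 𝕜
  have hrem := IsBigO.trans hf (((continuous_pow 4).tendsto' (0 : 𝕜) 0 (by simp)).isBigO_one 𝕜)
  simpa using hrem.add hpoly

theorem HasCubicExpansion.mul {f g : 𝕜 → 𝔸} {a b c d a' b' c' d' : 𝔸}
    (hf : HasCubicExpansion f a b c d) (hg : HasCubicExpansion g a' b' c' d') :
    HasCubicExpansion (fun z => f z * g z) (a * a') (a * b' + b * a') (a * c' + b * b' + c * a')
      (a * d' + b * c' + c * b' + d * a') := by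
  have h₁ : (fun z => (f z - cubicPoly a b c d z) * g z) =O[𝓝 0] fun z => z ^ 4 := by
    simpa using IsBigO.mul hf hg.isBigO_one
  have h₂ : (fun z => cubicPoly a b c d z * (g z - cubicPoly a' b' c' d' z)) =O[𝓝 0]
      fun z => z ^ 4 := by
    simpa using IsBigO.mul (((continuous_cubicPoly a b c d).tendsto 0).isBigO_one 𝕜) hg
  have h₃ : (fun z : 𝕜 => z ^ 4 •
      ((b * d' + c * c' + d * b') + z • (c * d' + d * c') + z ^ 2 • (d * d'))) =O[𝓝 0]
      fun z => z ^ 4 := by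
    have hS : (fun z : 𝕜 => (b * d' + c * c' + d * b') + z • (c * d' + d * c') +
        z ^ 2 • (d * d')) =O[𝓝 0] fun _ => (1 : 𝕜) :=
      (Continuous.tendsto (by fun_prop) 0).isBigO_one 𝕜
    simpa using (isBigO_refl (fun z : 𝕜 => z ^ 4) _).smul hS
  refine ((h₁.add h₂).add h₃).congr_left fun z => ?_
  simp only [sub_mul, mul_sub, cubicPoly_mul_cubicPoly]
  abel

theorem HasCubicExpansion.isBigO_sub {f g : 𝕜 → 𝔸} {a b c d : 𝔸}
    (hf : HasCubicExpansion f a b c d) (hg : HasCubicExpansion g a b c d) :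
    (fun z => f z - g z) =O[𝓝 0] fun z => z ^ 4 :=
  (IsBigO.sub hf hg).congr_left fun z => by abel

end CubicExpansion

section Exponential

variable {𝕜 𝔸 : Type*} [RCLike 𝕜] [NormedRing 𝔸] [NormedAlgebra 𝕜 𝔸] [CompleteSpace 𝔸]

theorem isBigO_exp_smul_sub_sum_range (X : 𝔸) (n : ℕ) :
    (fun z : 𝕜 => exp (z • X) - ∑ k ∈ Finset.range n, (z ^ k * (k ! : 𝕜)⁻¹) • X ^ k)
      =O[𝓝 0] fun z => z ^ n := by
  have hexp := (exp_hasFPowerSeriesOnBall (𝕂 := 𝕜) (𝔸 := 𝔸)).hasFPowerSeriesAt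
    |>.isBigO_sub_partialSum_pow n
  have hX : Tendsto (fun z : 𝕜 => z • X) (𝓝 0) (𝓝 0) :=
    (continuous_id.smul continuous_const).tendsto' 0 0 (by simp)
  refine ((hexp.comp_tendsto hX).trans ?_).congr_left fun z => ?_
  · refine isBigO_of_le' (c := ‖X‖ ^ n) _ fun z => ?_
    simp [norm_smul, mul_pow, mul_comm]
  · simp [FormalMultilinearSeries.partialSum, expSeries_apply_eq, smul_pow, smul_smul, mul_comm]

theorem hasCubicExpansion_exp_smul (X : 𝔸) :
    HasCubicExpansion (fun z : 𝕜 => exp (z • X)) 1 X ((2 : 𝕜)⁻¹ • X ^ 2) ((6 : 𝕜)⁻¹ • X ^ 3) :=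
  (isBigO_exp_smul_sub_sum_range X 4).congr_left fun z => by
    simp [cubicPoly, Finset.sum_range_succ, Nat.factorial, smul_smul]

theorem hasCubicExpansion_exp_pow_three_smul (W : 𝔸) :
    HasCubicExpansion (fun z : 𝕜 => exp (z ^ 3 • W)) 1 0 0 W := by
  have h := (isBigO_exp_smul_sub_sum_range W 2).comp_tendsto
    ((continuous_pow 3).tendsto' (0 : 𝕜) 0 (by simp))
  refine (h.trans ?_).congr_left fun z => ?_
  · simpa [Function.comp_def, ← pow_mul] using
      (isLittleO_pow_pow (𝕜 := 𝕜) (by norm_num : 4 < 6)).isBigO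
  · simp [cubicPoly, Finset.sum_range_succ]

theorem hasCubicExpansion_corrected_strang (P Q : 𝔸) :
    HasCubicExpansion
      (fun z : 𝕜 => exp (z • (2 : 𝕜)⁻¹ • P) * exp (z • Q) * exp (z • (2 : 𝕜)⁻¹ • P) *
        exp (z ^ 3 • (24 : 𝕜)⁻¹ • ⁅P + 2 • Q, ⁅P, Q⁆⁆))
      1 (P + Q) ((2 : 𝕜)⁻¹ • (P + Q) ^ 2) ((6 : 𝕜)⁻¹ • (P + Q) ^ 3) := by
  have h := (((hasCubicExpansion_exp_smul (𝕜 := 𝕜) ((2 : 𝕜)⁻¹ • P)).mul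
    (hasCubicExpansion_exp_smul (𝕜 := 𝕜) Q)).mul (hasCubicExpansion_exp_smul ((2 : 𝕜)⁻¹ • P))).mul
    (hasCubicExpansion_exp_pow_three_smul ((24 : 𝕜)⁻¹ • ⁅P + 2 • Q, ⁅P, Q⁆⁆))
  convert h using 1 <;>
    simp only [Ring.lie_def, pow_succ, pow_zero, one_mul, mul_one, mul_zero, add_zero,
      smul_mul_assoc, mul_smul_comm, smul_smul, mul_add, add_mul, smul_add, smul_sub, sub_mul,
      mul_sub, two_smul, mul_assoc] <;>
    module

theorem exists_norm_exp_add_sub_corrected_strang_le (P Q : 𝔸) :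
    ∃ C, 0 ≤ C ∧ ∀ t ∈ Set.Icc (0 : ℝ) 1,
      ‖exp ((t : 𝕜) • (P + Q)) - exp ((t : 𝕜) • (2 : 𝕜)⁻¹ • P) * exp ((t : 𝕜) • Q) *
          exp ((t : 𝕜) • (2 : 𝕜)⁻¹ • P) * exp ((t : 𝕜) ^ 3 • (24 : 𝕜)⁻¹ • ⁅P + 2 • Q, ⁅P, Q⁆⁆)‖
        ≤ C * t ^ 4 := by
  have hexp : Continuous (exp : 𝔸 → 𝔸) :=
    continuous_iff_continuousAt.2 fun x => (exp_analytic (𝕂 := 𝕜) x).continuousAt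
  have hreal := ((hasCubicExpansion_exp_smul (P + Q)).isBigO_sub
    (hasCubicExpansion_corrected_strang P Q)).comp_tendsto
    ((RCLike.continuous_ofReal (K := 𝕜)).tendsto' 0 0 RCLike.ofReal_zero)
  obtain ⟨C, hC₀, hC⟩ := (isBigO_principal_of_isBigO_nhdsWithin isCompact_Icc (by fun_prop)
    (by fun_prop) (fun t _ ht => by simpa using ht) (hreal.mono nhdsWithin_le_nhds)).exists_nonneg
  refine ⟨C, hC₀, fun t ht => ?_⟩
  simpa [abs_of_nonneg ht.1] using isBigOWith_principal.1 hC t ht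

end Exponential

/-- the second-order (Strang) splitting corrected by the leading error
exponential approximates `exp(it(A+B))` with error `O(t⁴)`. -/
theorem stmt8 {n : ℕ} (A B : Matrix (Fin n) (Fin n) ℂ) :
    ∃ C : ℝ, 0 ≤ C ∧ ∀ t ∈ Set.Icc (0:ℝ) 1,
      ‖NormedSpace.exp ((Complex.I * (t : ℂ)) • (A + B)) -
          NormedSpace.exp ((Complex.I * (t : ℂ) / 2) • A) *
          NormedSpace.exp ((Complex.I * (t : ℂ)) • B) *
          NormedSpace.exp ((Complex.I * (t : ℂ) / 2) • A) *
          NormedSpace.exp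
            ((-(Complex.I * (t : ℂ) ^ 3 / 24)) •
              ((A + 2 • B) * (A * B - B * A) - (A * B - B * A) * (A + 2 • B)))‖
        ≤ C * t ^ 4 := by
  have hlie : ⁅Complex.I • A + 2 • Complex.I • B, ⁅Complex.I • A, Complex.I • B⁆⁆ =
      (-Complex.I) • ((A + 2 • B) * (A * B - B * A) - (A * B - B * A) * (A + 2 • B)) := by
    rw [← Complex.I_pow_three]
    simp only [Ring.lie_def, smul_mul_assoc, mul_smul_comm, smul_smul, smul_sub, smul_add,
      mul_add, add_mul, mul_sub, sub_mul, two_smul]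
    module
  obtain ⟨C, hC₀, hC⟩ :=
    exists_norm_exp_add_sub_corrected_strang_le (𝕜 := ℂ) (Complex.I • A) (Complex.I • B)
  refine ⟨C, hC₀, fun t ht => le_of_eq_of_le ?_ (hC t ht)⟩
  simp only [smul_smul, ← smul_add, hlie, RCLike.ofReal_eq_complex_ofReal]
  ring_nf
end

section
/- Let A_L, Ã_R : [0,T] → M_n(ℂ) be continuous and let F : [0,T] → M_n(ℂ) be differentiable with F(0) = 1 and F′(s) = i A_L(s) F(s) + i F(s) Ã_R(s) for all s ∈ [0,T]. Suppose there are constants c, a ≥ 0 and k ∈ ℕ such that ‖F(s) − 1‖ ≤ c s^{k+1}, ‖A_L(s)‖ ≤ a, and ‖Ã_R(s)‖ ≤ a for all s ∈ [0,T]. Then for every t ∈ [0,T], ‖ ∫₀ᵗ (A_L(s) + Ã_R(s)) ds ‖ ≤ c t^{k+1} + 2 a c t^{k+2}/(k+2). -/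
/-!
Splitting `F = 1 + (F - 1)` in the differential equation gives
`F' = i (A_L + Ã_R) + i (A_L (F - 1) + (F - 1) Ã_R)`. Integrating from `0` to `t` expresses
`i ∫₀ᵗ (A_L + Ã_R)` as `F(t) - 1` minus the integral of the second term, whose integrand is
bounded by `2 a c s^{k+1}`; integrating this bound gives `2 a c t^{k+2}/(k+2)`.
-/

open scoped Matrix.Norms.L2Operator
open Matrix

open Set MeasureTheory

theorem norm_mul_add_mul_le {R : Type*} [NonUnitalSeminormedRing R] (A B X : R) :
    ‖A * X + X * B‖ ≤ (‖A‖ + ‖B‖) * ‖X‖ :=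
  calc ‖A * X + X * B‖ ≤ ‖A‖ * ‖X‖ + ‖X‖ * ‖B‖ :=
        (norm_add_le _ _).trans (add_le_add (norm_mul_le _ _) (norm_mul_le _ _))
    _ = (‖A‖ + ‖B‖) * ‖X‖ := by ring

theorem norm_integral_le_of_hasDerivAt_smul_add {E : Type*} [NormedAddCommGroup E]
    [NormedSpace ℂ E] [CompleteSpace E] {F G H : ℝ → E} {h : ℝ → ℝ} {z : ℂ} (hz : ‖z‖ = 1)
    {t : ℝ} (ht : 0 ≤ t) (hF : ∀ s ∈ Icc 0 t, HasDerivAt F (z • (G s + H s)) s)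
    (hG : IntervalIntegrable G volume 0 t) (hH : IntervalIntegrable H volume 0 t)
    (hh : IntervalIntegrable h volume 0 t) (hHh : ∀ s ∈ Icc 0 t, ‖H s‖ ≤ h s) :
    ‖∫ s in 0..t, G s‖ ≤ ‖F t - F 0‖ + ∫ s in 0..t, h s := by
  have hFTC : ∫ s in 0..t, z • (G s + H s) = F t - F 0 :=
    intervalIntegral.integral_eq_sub_of_hasDerivAt (fun s hs => hF s (uIcc_of_le ht ▸ hs))
      ((hG.add hH).smul z)
  rw [intervalIntegral.integral_smul, intervalIntegral.integral_add hG hH, smul_add] at hFTC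
  have hH_le : ‖∫ s in 0..t, H s‖ ≤ ∫ s in 0..t, h s :=
    intervalIntegral.norm_integral_le_of_norm_le ht
      (ae_of_all _ fun s hs => hHh s (Ioc_subset_Icc_self hs)) hh
  calc ‖∫ s in 0..t, G s‖ = ‖(F t - F 0) - z • ∫ s in 0..t, H s‖ := by
        rw [← hFTC, add_sub_cancel_right, norm_smul, hz, one_mul]
    _ ≤ ‖F t - F 0‖ + ‖∫ s in 0..t, H s‖ :=
      (norm_sub_le _ _).trans_eq (by rw [norm_smul, hz, one_mul])
    _ ≤ ‖F t - F 0‖ + ∫ s in 0..t, h s := by gcongr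

theorem stmt11_general {n : ℕ} (T : ℝ)
    (AL AR : ℝ → Matrix (Fin n) (Fin n) ℂ)
    (hALcont : ContinuousOn AL (Set.Icc 0 T))
    (hARcont : ContinuousOn AR (Set.Icc 0 T))
    (F : ℝ → Matrix (Fin n) (Fin n) ℂ) (hF0 : F 0 = 1)
    (hF : ∀ s ∈ Set.Icc 0 T,
      HasDerivAt F (Complex.I • (AL s * F s) + Complex.I • (F s * AR s)) s)
    (c a : ℝ) (ha : 0 ≤ a) (k : ℕ)
    (hFclose : ∀ s ∈ Set.Icc 0 T, ‖F s - 1‖ ≤ c * s ^ (k + 1))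
    (hALbdd : ∀ s ∈ Set.Icc 0 T, ‖AL s‖ ≤ a)
    (hARbdd : ∀ s ∈ Set.Icc 0 T, ‖AR s‖ ≤ a) :
    ∀ t ∈ Set.Icc 0 T,
      ‖∫ s in (0:ℝ)..t, (AL s + AR s)‖
        ≤ c * t ^ (k + 1) + 2 * a * c * t ^ (k + 2) / (k + 2) := by
  rintro t ⟨ht, htT⟩
  have hIcc : Icc 0 t ⊆ Icc 0 T := Icc_subset_Icc le_rfl htT
  have hsub : uIcc 0 t ⊆ Icc 0 T := uIcc_of_le ht ▸ hIcc
  have hFcont : ContinuousOn F (Icc 0 T) := fun s hs => (hF s hs).continuousAt.continuousWithinAt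
  have hderiv : ∀ s ∈ Icc 0 t, HasDerivAt F
      (Complex.I • ((AL s + AR s) + (AL s * (F s - 1) + (F s - 1) * AR s))) s := fun s hs =>
    (hF s (hIcc hs)).congr_deriv (by rw [← smul_add]; congr 1; noncomm_ring)
  have herror : ∀ s ∈ Icc 0 t,
      ‖AL s * (F s - 1) + (F s - 1) * AR s‖ ≤ 2 * a * c * s ^ (k + 1) := fun s hs =>
    calc _ ≤ (‖AL s‖ + ‖AR s‖) * ‖F s - 1‖ := norm_mul_add_mul_le _ _ _
      _ ≤ (a + a) * (c * s ^ (k + 1)) := by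
          gcongr
          exacts [hALbdd s (hIcc hs), hARbdd s (hIcc hs), hFclose s (hIcc hs)]
      _ = 2 * a * c * s ^ (k + 1) := by ring
  have hbound := norm_integral_le_of_hasDerivAt_smul_add Complex.norm_I ht hderiv
    ((hALcont.add hARcont).mono hsub).intervalIntegrable
    (((hALcont.mul (hFcont.sub continuousOn_const)).add
      ((hFcont.sub continuousOn_const).mul hARcont)).mono hsub).intervalIntegrable
    (by apply Continuous.intervalIntegrable; fun_prop) herror
  have hpow : ∫ s in (0:ℝ)..t, 2 * a * c * s ^ (k + 1) = 2 * a * c * t ^ (k + 2) / (k + 2) := by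
    rw [intervalIntegral.integral_const_mul, integral_pow]
    push_cast
    ring
  rw [hF0, hpow] at hbound
  exact hbound.trans (by gcongr; exact hFclose t ⟨ht, htT⟩)

/-- if the error unitary `F` generated by `A_L` and `Ã_R` is
`O(s^{k+1})`-close to the identity and the generators are bounded by `a`, then
`‖∫₀ᵗ (A_L(s) + Ã_R(s)) ds‖ ≤ c t^{k+1} + 2 a c t^{k+2}/(k+2)`. -/
theorem stmt11 {n : ℕ} (T : ℝ) (hT : 0 ≤ T)
    (AL AR : ℝ → Matrix (Fin n) (Fin n) ℂ)
    (hALcont : ContinuousOn AL (Set.Icc 0 T))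
    (hARcont : ContinuousOn AR (Set.Icc 0 T))
    (F : ℝ → Matrix (Fin n) (Fin n) ℂ) (hF0 : F 0 = 1)
    (hF : ∀ s ∈ Set.Icc 0 T,
      HasDerivAt F (Complex.I • (AL s * F s) + Complex.I • (F s * AR s)) s)
    (c a : ℝ) (hc : 0 ≤ c) (ha : 0 ≤ a) (k : ℕ)
    (hFclose : ∀ s ∈ Set.Icc 0 T, ‖F s - 1‖ ≤ c * s ^ (k + 1))
    (hALbdd : ∀ s ∈ Set.Icc 0 T, ‖AL s‖ ≤ a)
    (hARbdd : ∀ s ∈ Set.Icc 0 T, ‖AR s‖ ≤ a) :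
    ∀ t ∈ Set.Icc 0 T,
      ‖∫ s in (0:ℝ)..t, (AL s + AR s)‖
        ≤ c * t ^ (k + 1) + 2 * a * c * t ^ (k + 2) / (k + 2) :=
  stmt11_general T AL AR hALcont hARcont F hF0 hF c a ha k hFclose hALbdd hARbdd
end
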